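/- For any detector (𝒮_n, τ_n) operating at uncertainty level A_n, any real x ≥ 0, and any integer k ∈ {1,…,A_n−1}: ℙ₀(|𝒮^{≤k}| ≤ x) ≥ (ℙ(|𝒮^{≤τ_n}| ≤ x) − k/A_n) · A_n/(A_n − k), where ℙ₀ denotes the law obtained when the detector is run on an observation sequence that is i.i.d. P₀ throughout. Equivalently, ℙ(|𝒮^{≤τ_n}| ≤ x) ≤ ℙ₀(|𝒮^{≤k}| ≤ x)·(A_n − k)/A_n + k/A_n. -/

import Mathlib

open Filter Finset

noncomputable section

namespace ChangeDetect

variable {𝒴 : Type} [Fintype 𝒴]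

/-- `P` is a probability mass function on the finite alphabet `𝒴`. -/
def IsProb (P : 𝒴 → ℝ) : Prop := (∀ y, 0 ≤ P y) ∧ ∑ y, P y = 1

/-- Relative entropy (base 2): `D(P₁‖P₀) = Σ_y P₁(y) log₂ (P₁(y)/P₀(y))`. -/
def KL (P₁ P₀ : 𝒴 → ℝ) : ℝ := ∑ y, P₁ y * Real.logb 2 (P₁ y / P₀ y)

/-- Uncertainty level `A_n = ⌈2^(αn)⌉`. -/
def Alevel (α : ℝ) (n : ℕ) : ℕ := ⌈(2 : ℝ) ^ (α * n)⌉₊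

/-- `n*(α) = n α / D(P₁‖P₀)`. -/
def nstar (P₀ P₁ : 𝒴 → ℝ) (α : ℝ) (n : ℕ) : ℝ := n * α / KL P₁ P₀

/-- Likelihood of the observation sequence `y` (time `t ∈ {1,…,A+n-1}` is index `t-1`)
when the change starts at time `ν.1 + 1`: coordinates with index in `[ν.1, ν.1+n)`
are distributed according to `P₁`, all others according to `P₀`, independently. -/
def lik (P₀ P₁ : 𝒴 → ℝ) (n : ℕ) {A : ℕ} (ν : Fin A) (y : Fin (A + n - 1) → 𝒴) : ℝ :=
  ∏ i : Fin (A + n - 1), if ν.1 ≤ i.1 ∧ i.1 < ν.1 + n then P₁ (y i) else P₀ (y i)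

open Classical in
/-- Joint probability of an event `E` depending on the (uniform) change point `ν` and the
observations `y`. -/
def jointProb (P₀ P₁ : 𝒴 → ℝ) (n A : ℕ)
    (E : Fin A → (Fin (A + n - 1) → 𝒴) → Prop) : ℝ :=
  (A : ℝ)⁻¹ * ∑ ν : Fin A, ∑ y : Fin (A + n - 1) → 𝒴, if E ν y then lik P₀ P₁ n ν y else 0

open Classical in
/-- Probability of an event under an i.i.d.-`P₀` observation sequence of length `T`. -/
def nullProb (P₀ : 𝒴 → ℝ) (T : ℕ) (E : (Fin T → 𝒴) → Prop) : ℝ :=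
  ∑ y : Fin T → 𝒴, if E y then ∏ i, P₀ (y i) else 0

/-- Expectation under an i.i.d.-`P₀` observation sequence of length `T`. -/
def nullExp (P₀ : 𝒴 → ℝ) (T : ℕ) (f : (Fin T → 𝒴) → ℝ) : ℝ :=
  ∑ y : Fin T → 𝒴, f y * ∏ i, P₀ (y i)

/-- A full-sampling detector: a stopping time `tau` (valued in `{1,…,A+n-1}`, time `t`
corresponding to index `t-1`) with respect to the natural filtration of the observations. -/
structure FullDetector (𝒴 : Type) [Fintype 𝒴] (A n : ℕ) where
  tau : (Fin (A + n - 1) → 𝒴) → ℕ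
  tau_pos : ∀ y, 1 ≤ tau y
  tau_le : ∀ y, tau y ≤ A + n - 1
  stopping : ∀ y y', (∀ i : Fin (A + n - 1), i.1 + 1 ≤ tau y → y i = y' i) → tau y' = tau y

/-- False-alarm probability `ℙ(τ < ν)` of a full-sampling detector. -/
def ffalseAlarm (P₀ P₁ : 𝒴 → ℝ) {A n : ℕ} (D : FullDetector 𝒴 A n) : ℝ :=
  jointProb P₀ P₁ n A fun ν y => D.tau y < ν.1 + 1

/-- Delay `d(τ, ε)`: the least `l ≥ 0` such that `ℙ(τ - ν ≤ l - 1) ≥ 1 - ε`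
(the event `τ - ν ≤ l - 1` being `τ < ν + l`). -/
def fdelay (P₀ P₁ : 𝒴 → ℝ) {A n : ℕ} (D : FullDetector 𝒴 A n) (ε : ℝ) : ℕ :=
  sInf {l : ℕ | 1 - ε ≤ jointProb P₀ P₁ n A fun ν y => D.tau y < ν.1 + 1 + l}

/-- A detector `(𝒮, τ)` with (possibly randomized, adaptive) sampling strategy `samp`
(a set of sampling times in `{1,…,A+n-1}`) and stopping rule `tau`.  `R` is the
randomization seed space, with distribution `μR`.  The field `causal` expresses that the
sampling times are chosen sequentially and adaptively (each new sampling time depending only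
on previously observed samples) and that `tau` is a stopping time relative to the sampled
process: the samples taken up to any time `t`, as well as the decision to stop by time `t`,
are determined by the values observed at the sampled times up to `t`.  The last sample is
taken at time `tau`. -/
structure Detector (𝒴 : Type) [Fintype 𝒴] (A n : ℕ) where
  R : Type
  [fintypeR : Fintype R]
  μR : R → ℝ
  μR_nonneg : ∀ r, 0 ≤ μR r
  μR_sum : ∑ r, μR r = 1
  samp : R → (Fin (A + n - 1) → 𝒴) → Finset ℕ
  tau : R → (Fin (A + n - 1) → 𝒴) → ℕ
  tau_pos : ∀ r y, 1 ≤ tau r y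
  tau_le : ∀ r y, tau r y ≤ A + n - 1
  samp_subset : ∀ r y, samp r y ⊆ Finset.Icc 1 (A + n - 1)
  tau_mem : ∀ r y, tau r y ∈ samp r y
  samp_le_tau : ∀ r y, ∀ t ∈ samp r y, t ≤ tau r y
  causal : ∀ r y y' (t : ℕ),
    (∀ i : Fin (A + n - 1), i.1 + 1 ∈ samp r y → i.1 + 1 ≤ t → y i = y' i) →
    (samp r y').filter (· ≤ t) = (samp r y).filter (· ≤ t) ∧
    (tau r y ≤ t → tau r y' = tau r y) ∧ (tau r y' ≤ t → tau r y' = tau r y)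

attribute [instance] Detector.fintypeR

/-- `𝒮^{≤t}`: the samples taken up to time `t`. -/
def sampUpTo {A n : ℕ} (D : Detector 𝒴 A n) (r : D.R) (y : Fin (A + n - 1) → 𝒴)
    (t : ℕ) : Finset ℕ :=
  (D.samp r y).filter (· ≤ t)

/-- Probability, under the joint law (random seed, uniform change point, observations),
of an event `E`. -/
def dprob (P₀ P₁ : 𝒴 → ℝ) {A n : ℕ} (D : Detector 𝒴 A n)
    (E : D.R → Fin A → (Fin (A + n - 1) → 𝒴) → Prop) : ℝ :=
  ∑ r, D.μR r * jointProb P₀ P₁ n A (E r)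

/-- Probability of an event when the detector is run on an i.i.d.-`P₀` sequence (`ℙ₀`). -/
def dnullProb (P₀ : 𝒴 → ℝ) {A n : ℕ} (D : Detector 𝒴 A n)
    (E : D.R → (Fin (A + n - 1) → 𝒴) → Prop) : ℝ :=
  ∑ r, D.μR r * nullProb P₀ (A + n - 1) (E r)

/-- Expectation when the detector is run on an i.i.d.-`P₀` sequence (`𝔼₀`). -/
def dnullExp (P₀ : 𝒴 → ℝ) {A n : ℕ} (D : Detector 𝒴 A n)
    (f : D.R → (Fin (A + n - 1) → 𝒴) → ℝ) : ℝ :=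
  ∑ r, D.μR r * nullExp P₀ (A + n - 1) (f r)

open Classical in
/-- Conditional probability of an event given `ν = v` (the change starts at time `v.1+1`). -/
def dcondProb (P₀ P₁ : 𝒴 → ℝ) {A n : ℕ} (D : Detector 𝒴 A n) (v : Fin A)
    (E : D.R → (Fin (A + n - 1) → 𝒴) → Prop) : ℝ :=
  ∑ r, D.μR r * ∑ y : Fin (A + n - 1) → 𝒴, if E r y then lik P₀ P₁ n v y else 0

/-- False-alarm probability `ℙ(τ < ν)`. -/
def dfalseAlarm (P₀ P₁ : 𝒴 → ℝ) {A n : ℕ} (D : Detector 𝒴 A n) : ℝ :=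
  dprob P₀ P₁ D fun r ν y => D.tau r y < ν.1 + 1

/-- Delay `d((𝒮,τ), ε)`: the least `l ≥ 0` such that `ℙ(τ - ν ≤ l - 1) ≥ 1 - ε`. -/
def ddelay (P₀ P₁ : 𝒴 → ℝ) {A n : ℕ} (D : Detector 𝒴 A n) (ε : ℝ) : ℕ :=
  sInf {l : ℕ | 1 - ε ≤ dprob P₀ P₁ D fun r ν y => D.tau r y < ν.1 + 1 + l}

/-- Sampling rate `ρ((𝒮,τ), ε)`: the least `x ≥ 0` with `ℙ(|𝒮^{≤τ}|/τ ≤ x) ≥ 1 - ε`. -/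
def dsampRate (P₀ P₁ : 𝒴 → ℝ) {A n : ℕ} (D : Detector 𝒴 A n) (ε : ℝ) : ℝ :=
  sInf {x : ℝ | 0 ≤ x ∧ 1 - ε ≤ dprob P₀ P₁ D fun r ν y =>
    ((sampUpTo D r y (D.tau r y)).card : ℝ) / (D.tau r y : ℝ) ≤ x}

/-!
Average over the uniform change point. The event `|𝒮^{≤τ}| ≤ x` lies inside `|𝒮^{≤k}| ≤ x`,
and by causality of the sampling strategy the latter is determined by the first `k`
observations. Given one of the `k` change points `ν ≤ k`, its probability is at most `1`;
given one of the other `A - k`, the first `k` observations are i.i.d. `P₀`, so its probability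
is `ℙ₀(|𝒮^{≤k}| ≤ x)`. Hence `ℙ(|𝒮^{≤τ}| ≤ x) ≤ (k + (A - k) ℙ₀(|𝒮^{≤k}| ≤ x)) / A`, which
rearranges into both inequalities.
-/

section Marginal

variable {ι α R : Type*} [Fintype ι] [Fintype α] [CommSemiring R]

theorem sum_mul_eq_sum_mul_of_const {β : Type*} [Fintype β] {g : β → R}
    (hg : ∀ b b', g b = g b') {Q Q' : β → R} (hQ : ∑ b, Q b = ∑ b, Q' b) :
    ∑ b, g b * Q b = ∑ b, g b * Q' b := by
  rcases isEmpty_or_nonempty β with hβ | ⟨⟨b₀⟩⟩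
  · simp
  · simp_rw [hg _ b₀, ← Finset.mul_sum, hQ]

theorem sum_mul_prod_eq_of_dependsOn [DecidableEq ι] (p : ι → Prop) [DecidablePred p]
    {f : (ι → α) → R} (hf : ∀ y y', (∀ i, p i → y i = y' i) → f y = f y')
    {w w' : ι → α → R} (hw : ∀ i, ¬p i → ∑ a, w i a = 1) (hw' : ∀ i, ¬p i → ∑ a, w' i a = 1)
    (hww' : ∀ i, p i → w i = w' i) :
    ∑ y, f y * ∏ i, w i (y i) = ∑ y, f y * ∏ i, w' i (y i) := by
  set e := Equiv.piEquivPiSubtypeProd p fun _ => α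
  have hsplit : ∀ (v : ι → α → R) (y : ι → α), f y * ∏ i, v i (y i) =
      (f y * ∏ i : {i // p i}, v i (y i)) * ∏ i : {i // ¬p i}, v i (y i) := fun v y => by
    rw [mul_assoc, Fintype.prod_subtype_mul_prod_subtype p fun i => v i (y i)]
  simp_rw [hsplit w, hsplit w', fun i : {i // p i} => hww' i i.2]
  rw [← e.symm.sum_comp, ← e.symm.sum_comp, Fintype.sum_prod_type, Fintype.sum_prod_type]
  refine Finset.sum_congr rfl fun a _ => sum_mul_eq_sum_mul_of_const (fun b b' => ?_) ?_
  · have hab : ∀ b i (hi : p i), e.symm (a, b) i = a ⟨i, hi⟩ := fun b i hi => by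
      simp [e, Equiv.piEquivPiSubtypeProd, hi]
    congr 1
    · exact hf _ _ fun i hi => by rw [hab b i hi, hab b' i hi]
    · exact Finset.prod_congr rfl fun i _ => by rw [hab b i i.2, hab b' i i.2]
  · have hb : ∀ (b : {i // ¬p i} → α) (i : {i // ¬p i}), e.symm (a, b) i = b i := fun b i => by
      simp [e, Equiv.piEquivPiSubtypeProd, i.2]
    simp_rw [hb, ← Fintype.prod_sum, fun i : {i // ¬p i} => hw i i.2,
      fun i : {i // ¬p i} => hw' i i.2]

end Marginal

section Likelihood

variable {P₀ P₁ : 𝒴 → ℝ} {n A : ℕ}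

def obsLaw (P₀ P₁ : 𝒴 → ℝ) (n : ℕ) {A : ℕ} (v : Fin A) (i : Fin (A + n - 1)) : 𝒴 → ℝ :=
  if v.1 ≤ i.1 ∧ i.1 < v.1 + n then P₁ else P₀

omit [Fintype 𝒴] in
theorem lik_eq_prod_obsLaw (v : Fin A) (y : Fin (A + n - 1) → 𝒴) :
    lik P₀ P₁ n v y = ∏ i, obsLaw P₀ P₁ n v i (y i) := by
  simp only [lik, obsLaw]
  exact Finset.prod_congr rfl fun i _ => (apply_ite (fun P : 𝒴 → ℝ => P (y i)) _ _ _).symm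

theorem sum_obsLaw (h₀ : IsProb P₀) (h₁ : IsProb P₁) (v : Fin A) (i : Fin (A + n - 1)) :
    ∑ a, obsLaw P₀ P₁ n v i a = 1 := by
  unfold obsLaw
  split_ifs
  exacts [h₁.2, h₀.2]

theorem lik_nonneg (h₀ : IsProb P₀) (h₁ : IsProb P₁) (v : Fin A) (y : Fin (A + n - 1) → 𝒴) :
    0 ≤ lik P₀ P₁ n v y :=
  Finset.prod_nonneg fun i _ => by split_ifs; exacts [h₁.1 _, h₀.1 _]

theorem sum_lik (h₀ : IsProb P₀) (h₁ : IsProb P₁) (v : Fin A) :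
    ∑ y : Fin (A + n - 1) → 𝒴, lik P₀ P₁ n v y = 1 := by
  simp_rw [lik_eq_prod_obsLaw, ← Fintype.prod_sum, sum_obsLaw h₀ h₁, Finset.prod_const_one]

open Classical in
theorem sum_ite_lik_le_one (h₀ : IsProb P₀) (h₁ : IsProb P₁) (v : Fin A)
    (E : (Fin (A + n - 1) → 𝒴) → Prop) :
    ∑ y, (if E y then lik P₀ P₁ n v y else 0) ≤ 1 :=
  (sum_lik h₀ h₁ v).le.trans' <| Finset.sum_le_sum fun y _ => by
    split_ifs
    exacts [le_rfl, lik_nonneg h₀ h₁ v y]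

open Classical in
theorem sum_ite_lik_eq_nullProb (h₀ : IsProb P₀) (h₁ : IsProb P₁) {k : ℕ} {v : Fin A}
    (hkv : k ≤ v.1) {E : (Fin (A + n - 1) → 𝒴) → Prop}
    (hE : ∀ y y', (∀ i : Fin (A + n - 1), i.1 < k → y i = y' i) → (E y ↔ E y')) :
    ∑ y, (if E y then lik P₀ P₁ n v y else 0) = nullProb P₀ (A + n - 1) E := by
  have hind : ∀ w : Fin (A + n - 1) → 𝒴 → ℝ, ∑ y, (if E y then ∏ i, w i (y i) else 0) =
      ∑ y, (if E y then (1 : ℝ) else 0) * ∏ i, w i (y i) :=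
    fun w => Finset.sum_congr rfl fun y _ => (boole_mul _ _).symm
  simp only [lik_eq_prod_obsLaw]
  rw [nullProb, hind, hind]
  exact sum_mul_prod_eq_of_dependsOn (fun i => i.1 < k) (fun y y' h => by simp only [hE y y' h])
    (fun i _ => sum_obsLaw h₀ h₁ v i) (fun _ _ => h₀.2) (fun i hi => if_neg (by omega))

open Classical in
theorem jointProb_le_of_dependsOn (h₀ : IsProb P₀) (h₁ : IsProb P₁) {k : ℕ} (hkA : k ≤ A)
    {E : (Fin (A + n - 1) → 𝒴) → Prop}
    (hE : ∀ y y', (∀ i : Fin (A + n - 1), i.1 < k → y i = y' i) → (E y ↔ E y')) :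
    jointProb P₀ P₁ n A (fun _ => E) ≤
      (A : ℝ)⁻¹ * (k + (A - k) * nullProb P₀ (A + n - 1) E) := by
  refine mul_le_mul_of_nonneg_left ?_ (by positivity)
  calc ∑ v : Fin A, ∑ y, (if E y then lik P₀ P₁ n v y else 0)
      ≤ ∑ v : Fin A, if v.1 < k then 1 else nullProb P₀ (A + n - 1) E :=
        Finset.sum_le_sum fun v _ => by
          split_ifs with hv
          · exact sum_ite_lik_le_one h₀ h₁ v E
          · exact (sum_ite_lik_eq_nullProb h₀ h₁ (not_lt.1 hv) hE).le
    _ = k + (A - k) * nullProb P₀ (A + n - 1) E := by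
        have hlt : #{v : Fin A | v.1 < k} = k := by
          rw [Fin.card_filter_val_lt, min_eq_right hkA]
        have hge : #{v : Fin A | ¬v.1 < k} = A - k := by
          have := Finset.card_filter_add_card_filter_not (s := Finset.univ)
            (p := fun v : Fin A => v.1 < k)
          simp only [Finset.card_univ, Fintype.card_fin, hlt] at this
          omega
        rw [Finset.sum_ite, Finset.sum_const, Finset.sum_const, nsmul_one, nsmul_eq_mul, hlt,
          hge, Nat.cast_sub hkA]

theorem jointProb_mono {E F : Fin A → (Fin (A + n - 1) → 𝒴) → Prop} (h₀ : IsProb P₀)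
    (h₁ : IsProb P₁) (hEF : ∀ v y, E v y → F v y) :
    jointProb P₀ P₁ n A E ≤ jointProb P₀ P₁ n A F := by
  classical
  refine mul_le_mul_of_nonneg_left (Finset.sum_le_sum fun v _ => Finset.sum_le_sum fun y _ => ?_)
    (by positivity)
  by_cases hE : E v y
  · simp [hE, hEF v y hE]
  · simp only [hE, if_false]
    split_ifs
    exacts [lik_nonneg h₀ h₁ v y, le_rfl]

end Likelihood

section Sampling

variable {A n : ℕ} (D : Detector 𝒴 A n)

theorem sampUpTo_eq_of_forall_lt_eq (r : D.R) {y y' : Fin (A + n - 1) → 𝒴} {t : ℕ}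
    (h : ∀ i : Fin (A + n - 1), i.1 < t → y i = y' i) :
    sampUpTo D r y' t = sampUpTo D r y t :=
  (D.causal r y y' t fun i _ hi => h i (by omega)).1

theorem card_sampUpTo_le_card_sampUpTo_tau (r : D.R) (y : Fin (A + n - 1) → 𝒴) (t : ℕ) :
    (sampUpTo D r y t).card ≤ (sampUpTo D r y (D.tau r y)).card := by
  rw [sampUpTo, sampUpTo, Finset.filter_true_of_mem fun t ht => D.samp_le_tau r y t ht]
  exact Finset.card_le_card (Finset.filter_subset _ _)

theorem dprob_card_sampUpTo_tau_le {P₀ P₁ : 𝒴 → ℝ} (h₀ : IsProb P₀) (h₁ : IsProb P₁) (x : ℝ)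
    {k : ℕ} (hkA : k ≤ A) :
    (dprob P₀ P₁ D fun r _ y => ((sampUpTo D r y (D.tau r y)).card : ℝ) ≤ x) ≤
      (A : ℝ)⁻¹ *
        (k + (A - k) * dnullProb P₀ D fun r y => ((sampUpTo D r y k).card : ℝ) ≤ x) := by
  calc (dprob P₀ P₁ D fun r _ y => ((sampUpTo D r y (D.tau r y)).card : ℝ) ≤ x)
      ≤ ∑ r, D.μR r * ((A : ℝ)⁻¹ *
          (k + (A - k) * nullProb P₀ (A + n - 1) fun y => ((sampUpTo D r y k).card : ℝ) ≤ x)) :=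
        Finset.sum_le_sum fun r _ => mul_le_mul_of_nonneg_left
          ((jointProb_mono h₀ h₁ fun _ y h => (Nat.cast_le.2
              (card_sampUpTo_le_card_sampUpTo_tau D r y k)).trans h).trans
            (jointProb_le_of_dependsOn h₀ h₁ hkA fun y y' hyy' => by
              rw [sampUpTo_eq_of_forall_lt_eq D r hyy']))
          (D.μR_nonneg r)
    _ = ∑ r, (D.μR r * ((A : ℝ)⁻¹ * k) + (A : ℝ)⁻¹ * (A - k) *
          (D.μR r * nullProb P₀ (A + n - 1) fun y => ((sampUpTo D r y k).card : ℝ) ≤ x)) :=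
        Finset.sum_congr rfl fun r _ => by ring
    _ = _ := by
        rw [Finset.sum_add_distrib, ← Finset.sum_mul, D.μR_sum, ← Finset.mul_sum, dnullProb]
        ring

end Sampling

theorem statement14_general {𝒴 : Type} [Fintype 𝒴] (P₀ P₁ : 𝒴 → ℝ)
    (h₀ : IsProb P₀) (h₁ : IsProb P₁) (α : ℝ) (n : ℕ)
    (D : Detector 𝒴 (Alevel α n) n)
    (x : ℝ) (k : ℕ) (hk2 : k < Alevel α n) :
    ((dprob P₀ P₁ D fun r ν y => ((sampUpTo D r y (D.tau r y)).card : ℝ) ≤ x) -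
        (k : ℝ) / (Alevel α n : ℝ)) * (Alevel α n : ℝ) / ((Alevel α n : ℝ) - k)
      ≤ dnullProb P₀ D (fun r y => ((sampUpTo D r y k).card : ℝ) ≤ x) ∧
    (dprob P₀ P₁ D fun r ν y => ((sampUpTo D r y (D.tau r y)).card : ℝ) ≤ x)
      ≤ dnullProb P₀ D (fun r y => ((sampUpTo D r y k).card : ℝ) ≤ x) *
          ((Alevel α n : ℝ) - k) / (Alevel α n : ℝ) + (k : ℝ) / (Alevel α n : ℝ) := by
  have hbound := dprob_card_sampUpTo_tau_le D h₀ h₁ x hk2.le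
  generalize (dprob P₀ P₁ D fun r ν y => ((sampUpTo D r y (D.tau r y)).card : ℝ) ≤ x) = p,
    dnullProb P₀ D (fun r y => ((sampUpTo D r y k).card : ℝ) ≤ x) = q at hbound ⊢
  have hkA : (k : ℝ) < Alevel α n := by exact_mod_cast hk2
  have hA : (0 : ℝ) < Alevel α n := (Nat.cast_nonneg k).trans_lt hkA
  rw [inv_mul_eq_div, le_div_iff₀ hA] at hbound
  constructor
  · rw [div_le_iff₀ (sub_pos.2 hkA), sub_mul, div_mul_cancel₀ _ hA.ne']
    linarith
  · rw [← add_div, le_div_iff₀ hA]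
    linarith

/-- Comparing the number of samples under `ℙ` and under `ℙ₀`.
For any detector operating at uncertainty level `A_n = ⌈2^(αn)⌉`, any `x ≥ 0` and any
`k ∈ {1,…,A_n-1}`:
`ℙ₀(|𝒮^{≤k}| ≤ x) ≥ (ℙ(|𝒮^{≤τ}| ≤ x) - k/A_n)·A_n/(A_n - k)`, equivalently
`ℙ(|𝒮^{≤τ}| ≤ x) ≤ ℙ₀(|𝒮^{≤k}| ≤ x)·(A_n - k)/A_n + k/A_n`, where `ℙ₀` is the law
obtained when the detector is run on an i.i.d.-`P₀` observation sequence. -/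
theorem statement14 {𝒴 : Type} [Fintype 𝒴] (P₀ P₁ : 𝒴 → ℝ)
    (h₀ : IsProb P₀) (h₁ : IsProb P₁) (hac : ∀ y, P₀ y = 0 → P₁ y = 0)
    (hD : 0 < KL P₁ P₀) (α : ℝ) (hα : 0 < α) (n : ℕ) (hn : 1 ≤ n)
    (D : Detector 𝒴 (Alevel α n) n)
    (x : ℝ) (hx : 0 ≤ x) (k : ℕ) (hk1 : 1 ≤ k) (hk2 : k < Alevel α n) :
    ((dprob P₀ P₁ D fun r ν y => ((sampUpTo D r y (D.tau r y)).card : ℝ) ≤ x) -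
        (k : ℝ) / (Alevel α n : ℝ)) * (Alevel α n : ℝ) / ((Alevel α n : ℝ) - k)
      ≤ dnullProb P₀ D (fun r y => ((sampUpTo D r y k).card : ℝ) ≤ x) ∧
    (dprob P₀ P₁ D fun r ν y => ((sampUpTo D r y (D.tau r y)).card : ℝ) ≤ x)
      ≤ dnullProb P₀ D (fun r y => ((sampUpTo D r y k).card : ℝ) ≤ x) *
          ((Alevel α n : ℝ) - k) / (Alevel α n : ℝ) + (k : ℝ) / (Alevel α n : ℝ) :=
  statement14_general P₀ P₁ h₀ h₁ α n D x k hk2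

end ChangeDetect
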